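/- Let Q be a quadratic form over ℚ_p in n variables (with integer, or more generally p-adic, coefficients when restricted to ℤ^n). Then R(Q(ℤ^n)) is dense in ℚ_p if and only if R(Q(ℚ_p^n)) = ℚ_p. -/

import Mathlib

/-!
The set of ratios `R(Q(V))` is stable under multiplication by squares, since `Q (c • v) = c² Q v`.
If `R(Q(ℤⁿ))` is dense, a nonzero `x` can be approximated by some `q ∈ R(Q(ℤⁿ))` with
`‖x / q - 1‖ < ‖2‖²`; then `x / q` is a square by Hensel's lemma, so `x ∈ R(Q(ℚ_pⁿ))`.
Conversely, `R(Q(ℚⁿ)) ⊆ R(Q(ℤⁿ))` by clearing a common denominator of the two vectors, and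
`R(Q(ℚ_pⁿ))` lies in the closure of `R(Q(ℚⁿ))` because `ℚⁿ` is dense in `ℚ_pⁿ` and
`(v, w) ↦ Q v / Q w` is continuous wherever `Q w ≠ 0`.
-/

def quotSet {K : Type*} [DivisionRing K] (A : Set K) : Set K :=
  {x | ∃ a ∈ A, ∃ b ∈ A, b ≠ 0 ∧ x = a / b}

open Set Topology Filter

theorem QuadraticMap.continuous_of_finite {R M N : Type*} [CommRing R] [TopologicalSpace R]
    [IsTopologicalRing R] [AddCommGroup M] [Module R M] [TopologicalSpace M]
    [IsModuleTopology R M] [Module.Finite R M] [Module.Free R M] [AddCommGroup N] [Module R N]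
    [TopologicalSpace N] [IsModuleTopology R N] (Q : QuadraticMap R M N) : Continuous Q := by
  let b := Module.Free.chooseBasis R M
  -- `toBilin` needs an order on the basis index; any one will do.
  let _ : LinearOrder (Module.Free.ChooseBasisIndex R M) :=
    LinearOrder.lift' _ (Fintype.equivFin _).injective
  have hQ : ⇑Q = fun x => Q.toBilin b x x :=
    congrArg DFunLike.coe (Q.toQuadraticMap_toBilin b).symm
  rw [hQ]
  exact (IsModuleTopology.continuous_bilinear_of_finite_left _).comp
    (continuous_id.prodMk continuous_id)

section Ratios

variable {K : Type*}

theorem quotSet_mono [DivisionRing K] {A B : Set K} (h : A ⊆ B) : quotSet A ⊆ quotSet B := by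
  rintro x ⟨a, ha, b, hb, hb0, rfl⟩
  exact ⟨a, h ha, b, h hb, hb0, rfl⟩

theorem zero_mem_quotSet [DivisionRing K] {A : Set K} (h0 : 0 ∈ A) (h : (quotSet A).Nonempty) :
    0 ∈ quotSet A := by
  obtain ⟨-, -, -, b, hb, hb0, -⟩ := h
  exact ⟨0, h0, b, hb, hb0, (zero_div b).symm⟩

theorem sq_mul_mem_quotSet_range [Field K] {M : Type*} [AddCommGroup M] [Module K M]
    (Q : QuadraticForm K M) (c : K) {x : K} (hx : x ∈ quotSet (range Q)) :
    c ^ 2 * x ∈ quotSet (range Q) := by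
  obtain ⟨-, ⟨v, rfl⟩, -, ⟨w, rfl⟩, hw, rfl⟩ := hx
  refine ⟨Q (c • v), mem_range_self _, Q w, mem_range_self _, hw, ?_⟩
  rw [QuadraticMap.map_smul, smul_eq_mul, mul_div_assoc, sq]

theorem quotSet_range_subset_closure_image [Field K] [TopologicalSpace K]
    [IsTopologicalDivisionRing K] [T1Space K] {E : Type*} [TopologicalSpace E] {f : E → K}
    (hf : Continuous f) {s : Set E} (hs : Dense s) :
    quotSet (range f) ⊆ closure (quotSet (f '' s)) := by
  rintro _ ⟨-, ⟨v, rfl⟩, -, ⟨w, rfl⟩, hw, rfl⟩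
  let F : E × E → K := fun z => f z.1 / f z.2
  let t : Set (E × E) := {z | f z.2 ≠ 0}
  have ht : IsOpen t := isOpen_compl_singleton.preimage (hf.comp continuous_snd)
  have hvw : (v, w) ∈ closure (t ∩ s ×ˢ s) := (hs.prod hs).open_subset_closure_inter ht hw
  have hF : ContinuousAt F (v, w) :=
    (hf.comp continuous_fst).continuousAt.div (hf.comp continuous_snd).continuousAt hw
  refine closure_mono ?_ (hF.continuousWithinAt.mem_closure_image hvw)
  rintro _ ⟨⟨a, b⟩, ⟨hb, ha, hb'⟩, rfl⟩
  exact ⟨f a, mem_image_of_mem f ha, f b, mem_image_of_mem f hb', hb, rfl⟩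

end Ratios

theorem exists_int_smul_eq_intCast {ι : Type*} [Finite ι] (v w : ι → ℚ) :
    ∃ d : ℤ, d ≠ 0 ∧ ∃ u u' : ι → ℤ, (d : ℚ) • v = (↑) ∘ u ∧ (d : ℚ) • w = (↑) ∘ u' := by
  obtain ⟨⟨d, hd⟩, h⟩ :=
    IsLocalization.exist_integer_multiples_of_finite (nonZeroDivisors ℤ) (Sum.elim v w)
  choose u hu using h
  refine ⟨d, nonZeroDivisors.ne_zero hd, u ∘ Sum.inl, u ∘ Sum.inr, funext fun i => ?_,
    funext fun i => ?_⟩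
  · simpa [Algebra.smul_def] using (hu (Sum.inl i)).symm
  · simpa [Algebra.smul_def] using (hu (Sum.inr i)).symm

theorem quotSet_image_ratCast_subset {K ι : Type*} [Field K] [CharZero K] [Finite ι]
    (Q : QuadraticForm K (ι → K)) :
    quotSet (Q '' range fun v : ι → ℚ => fun i => (v i : K)) ⊆
      quotSet (range fun v : ι → ℤ => Q fun i => (v i : K)) := by
  rintro _ ⟨-, ⟨-, ⟨v, rfl⟩, rfl⟩, -, ⟨-, ⟨w, rfl⟩, rfl⟩, hw, rfl⟩
  obtain ⟨d, hd, u, u', hu, hu'⟩ := exists_int_smul_eq_intCast v w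
  have hscale : ∀ (x : ι → ℚ) (y : ι → ℤ), (d : ℚ) • x = (↑) ∘ y →
      Q (fun i => (y i : K)) = (d : K) ^ 2 * Q (fun i => (x i : K)) := by
    intro x y hxy
    have : (fun i => (y i : K)) = (d : K) • fun i => (x i : K) := by
      ext i
      simpa using congrArg (fun z : ℚ => (z : K)) (congrFun hxy i).symm
    rw [this, QuadraticMap.map_smul, smul_eq_mul, sq]
  have hd' : (d : K) ^ 2 ≠ 0 := pow_ne_zero 2 (Int.cast_ne_zero.mpr hd)
  refine ⟨_, mem_range_self u, _, mem_range_self u', ?_, ?_⟩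
  · rw [hscale w u' hu']; exact mul_ne_zero hd' hw
  · rw [hscale v u hu, hscale w u' hu', mul_div_mul_left _ _ hd']

namespace Padic

variable {p : ℕ} [Fact p.Prime]

theorem exists_sq_eq_of_norm_sub_one_lt {b : ℚ_[p]} (h : ‖b - 1‖ < ‖(2 : ℚ_[p])‖ ^ 2) :
    ∃ z : ℚ_[p], z ^ 2 = b := by
  have hb : ‖b‖ ≤ 1 := by
    have h2 : ‖(2 : ℚ_[p])‖ ^ 2 ≤ 1 :=
      pow_le_one₀ (norm_nonneg _) (by simpa using norm_int_le_one (p := p) 2)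
    calc ‖b‖ = ‖(b - 1) + 1‖ := by rw [sub_add_cancel]
      _ ≤ max ‖b - 1‖ 1 := by simpa only [norm_one] using nonarchimedean (b - 1) 1
      _ ≤ 1 := max_le (h.le.trans h2) le_rfl
  obtain ⟨b, rfl⟩ : ∃ b' : ℤ_[p], (b' : ℚ_[p]) = b := ⟨⟨b, hb⟩, rfl⟩
  have hnorm : ‖(Polynomial.X ^ 2 - Polynomial.C b).aeval (1 : ℤ_[p])‖ <
      ‖(Polynomial.X ^ 2 - Polynomial.C b).derivative.aeval (1 : ℤ_[p])‖ ^ 2 := by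
    simp only [map_sub, map_pow, Polynomial.aeval_X, Polynomial.aeval_C, Polynomial.derivative_X_pow, Polynomial.derivative_C]
    simp only [one_pow, Algebra.algebraMap_self, RingHom.id_apply, map_zero, sub_zero, map_mul,
      Polynomial.aeval_C, Nat.add_one_sub_one, pow_one, Polynomial.aeval_X, mul_one,
      PadicInt.norm_def]
    push_cast
    rwa [norm_sub_rev]
  obtain ⟨z, hz, -⟩ := hensels_lemma hnorm
  refine ⟨z, ?_⟩
  simpa [sub_eq_zero] using congrArg ((↑) : ℤ_[p] → ℚ_[p]) hz

theorem eventually_exists_sq_mul_eq {x : ℚ_[p]} (hx : x ≠ 0) :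
    ∀ᶠ y in 𝓝 x, ∃ c : ℚ_[p], x = c ^ 2 * y := by
  have hr : 0 < ‖x‖ * ‖(2 : ℚ_[p])‖ ^ 2 :=
    mul_pos (norm_pos_iff.mpr hx) (pow_pos (norm_pos_iff.mpr two_ne_zero) 2)
  filter_upwards [eventually_ne_nhds hx, Metric.ball_mem_nhds x hr] with y hy hyx
  have hclose : ‖y / x - 1‖ < ‖(2 : ℚ_[p])‖ ^ 2 := by
    rw [div_sub_one hx, norm_div, div_lt_iff₀ (norm_pos_iff.mpr hx), mul_comm]
    exact hyx
  obtain ⟨z, hz⟩ := exists_sq_eq_of_norm_sub_one_lt hclose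
  have hz0 : z ≠ 0 := by rintro rfl; simp [eq_comm, hy, hx] at hz
  rw [eq_div_iff hx] at hz
  refine ⟨z⁻¹, ?_⟩
  rw [← hz]
  field_simp

theorem mem_of_dense_subset_of_sq_mul_mem {S D : Set ℚ_[p]}
    (hS : ∀ c : ℚ_[p], ∀ y ∈ S, c ^ 2 * y ∈ S) (hD : Dense D) (hDS : D ⊆ S) {x : ℚ_[p]}
    (hx : x ≠ 0) : x ∈ S := by
  obtain ⟨y, ⟨c, rfl⟩, hyD⟩ := mem_closure_iff_nhds.mp (hD x) _ (eventually_exists_sq_mul_eq hx)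
  exact hS c y (hDS hyD)

end Padic

theorem stmt5_general (p : ℕ) [Fact p.Prime] (n : ℕ)
    (Q : QuadraticForm ℚ_[p] (Fin n → ℚ_[p])) :
    Dense (quotSet {y : ℚ_[p] | ∃ v : Fin n → ℤ, Q (fun i => (v i : ℚ_[p])) = y}) ↔
    quotSet {y : ℚ_[p] | ∃ v : Fin n → ℚ_[p], Q v = y} = Set.univ := by
  change Dense (quotSet (range fun v : Fin n → ℤ => Q fun i => (v i : ℚ_[p]))) ↔
    quotSet (range Q) = univ
  have hZQ : quotSet (range fun v : Fin n → ℤ => Q fun i => (v i : ℚ_[p])) ⊆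
      quotSet (range Q) :=
    quotSet_mono (range_subset_iff.mpr fun v => mem_range_self _)
  constructor
  · intro hD
    refine eq_univ_of_forall fun x => ?_
    rcases eq_or_ne x 0 with rfl | hx
    · exact zero_mem_quotSet ⟨0, Q.map_zero⟩ (hD.nonempty.mono hZQ)
    · exact Padic.mem_of_dense_subset_of_sq_mul_mem (sq_mul_mem_quotSet_range Q) hD hZQ hx
  · intro hQ x
    have hRat : Dense (range fun v : Fin n → ℚ => fun i => (v i : ℚ_[p])) :=
      DenseRange.piMap fun _ => Padic.denseRange_ratCast p
    exact closure_mono (quotSet_image_ratCast_subset Q)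
      (quotSet_range_subset_closure_image Q.continuous_of_finite hRat (hQ ▸ mem_univ x))

theorem stmt5 (p : ℕ) [Fact p.Prime] (n : ℕ) (hn : 0 < n)
    (Q : QuadraticForm ℚ_[p] (Fin n → ℚ_[p])) :
    Dense (quotSet {y : ℚ_[p] | ∃ v : Fin n → ℤ, Q (fun i => (v i : ℚ_[p])) = y}) ↔
    quotSet {y : ℚ_[p] | ∃ v : Fin n → ℚ_[p], Q v = y} = Set.univ :=
  stmt5_general p n Q
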